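/- The generalized Laguerre polynomial L_n^{(ν)} is a polynomial solution of the differential equation x·y'' + (ν+1-x)·y' + n·y = 0; that is, for all real x, x·(L_n^{(ν)})''(x) + (ν+1-x)·(L_n^{(ν)})'(x) + n·L_n^{(ν)}(x) = 0. -/

import Mathlib

/-!
In the monomial basis the Laguerre (Kummer) operator `x y'' + (ν + 1 - x) y' + n y` acts on
coefficients by `c ↦ (m + 1)(ν + 1 + m) c_{m+1} - (m - n) c_m`. The coefficients of `L_n^{(ν)}`
satisfy exactly this two-term recurrence, because `(ν + k + 1)_{n-k} = (ν + k + 1) (ν + k + 2)_{n-k-1}`;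
for `m ≥ n` both terms vanish since `L_n^{(ν)}` has degree `n`.
-/

open Finset

/-- Pochhammer symbol (rising factorial) `(a)_k` over the reals. -/
noncomputable def poch (a : ℝ) (k : ℕ) : ℝ := (ascPochhammer ℝ k).eval a

/-- Generalized Laguerre polynomial
`L_n^{(ν)}(x) = ∑_{k=0}^n (-1)^k binom(n+ν, n-k) x^k / k!`,
where `binom(n+ν, n-k) = (ν+k+1)_{n-k}/(n-k)!`. -/
noncomputable def laguerre (ν : ℝ) (n : ℕ) (x : ℝ) : ℝ :=
  ∑ k ∈ Finset.range (n + 1),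
    (-1 : ℝ) ^ k * (poch (ν + k + 1) (n - k) / (n - k).factorial) * x ^ k / k.factorial

open Polynomial

noncomputable def kummerOperator {R : Type*} [CommRing R] (a b : R) (p : R[X]) : R[X] :=
  X * derivative (derivative p) + (C b - X) * derivative p - C a * p

lemma coeff_kummerOperator {R : Type*} [CommRing R] (a b : R) (p : R[X]) (m : ℕ) :
    (kummerOperator a b p).coeff m
      = (m + 1) * (b + m) * p.coeff (m + 1) - (a + m) * p.coeff m := by
  simp only [kummerOperator, coeff_add, coeff_sub, sub_mul, coeff_C_mul]
  cases m with
  | zero => simp [mul_coeff_zero, coeff_derivative]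
  | succ m =>
    simp only [coeff_X_mul, coeff_derivative]
    push_cast
    ring

lemma poch_succ (a : ℝ) (m : ℕ) : poch a (m + 1) = a * poch (a + 1) m := by
  simp [poch, ascPochhammer_succ_left, eval_comp]

noncomputable def laguerreCoeff (ν : ℝ) (n k : ℕ) : ℝ :=
  (-1 : ℝ) ^ k * (poch (ν + k + 1) (n - k) / (n - k).factorial) / k.factorial

lemma laguerreCoeff_succ (ν : ℝ) {n k : ℕ} (h : k < n) :
    (k + 1) * (ν + 1 + k) * laguerreCoeff ν n (k + 1) = (k - n) * laguerreCoeff ν n k := by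
  obtain ⟨m, rfl⟩ : ∃ m, n = k + m + 1 := ⟨n - k - 1, by omega⟩
  rw [laguerreCoeff, laguerreCoeff, show k + m + 1 - (k + 1) = m by omega,
    show k + m + 1 - k = m + 1 by omega, poch_succ, Nat.factorial_succ, Nat.factorial_succ]
  push_cast
  rw [show ν + ((k : ℝ) + 1) + 1 = ν + k + 1 + 1 by ring]
  field_simp
  ring

noncomputable def laguerrePoly (ν : ℝ) (n : ℕ) : ℝ[X] :=
  ∑ k ∈ range (n + 1), C (laguerreCoeff ν n k) * X ^ k

lemma eval_laguerrePoly (ν : ℝ) (n : ℕ) (x : ℝ) : (laguerrePoly ν n).eval x = laguerre ν n x := by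
  simp only [laguerre, laguerrePoly, laguerreCoeff, eval_finsetSum, eval_mul, eval_pow, eval_C,
    eval_X]
  exact sum_congr rfl fun k _ => by ring

lemma coeff_laguerrePoly (ν : ℝ) (n m : ℕ) :
    (laguerrePoly ν n).coeff m = if m ≤ n then laguerreCoeff ν n m else 0 := by
  simp [laguerrePoly, finsetSum_coeff, coeff_C_mul, coeff_X_pow]

lemma kummerOperator_laguerrePoly (ν : ℝ) (n : ℕ) :
    kummerOperator (-n : ℝ) (ν + 1) (laguerrePoly ν n) = 0 := by
  ext m
  rw [coeff_kummerOperator, coeff_zero, coeff_laguerrePoly, coeff_laguerrePoly]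
  rcases lt_trichotomy m n with h | rfl | h
  · rw [if_pos (Nat.succ_le_of_lt h), if_pos h.le]
    linear_combination laguerreCoeff_succ ν h
  · simp
  · rw [if_neg (by omega), if_neg h.not_ge]
    ring

lemma deriv_eval_eq_eval_derivative {𝕜 : Type*} [NontriviallyNormedField 𝕜] (p : 𝕜[X]) :
    deriv (fun x => p.eval x) = fun x => (derivative p).eval x :=
  funext fun _ => p.deriv

/-- `L_n^{(ν)}` solves the Laguerre differential equation
`x y'' + (ν+1-x) y' + n y = 0`. -/
theorem laguerre_ode (ν : ℝ) (n : ℕ) (x : ℝ) :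
    x * deriv (deriv (laguerre ν n)) x + (ν + 1 - x) * deriv (laguerre ν n) x
      + n * laguerre ν n x = 0 := by
  have hL : laguerre ν n = fun x => (laguerrePoly ν n).eval x :=
    funext fun x => (eval_laguerrePoly ν n x).symm
  have h := congrArg (eval x) (kummerOperator_laguerrePoly ν n)
  simp only [kummerOperator, eval_sub, eval_add, eval_mul, eval_X, eval_C, eval_zero] at h
  rw [hL, deriv_eval_eq_eval_derivative, deriv_eval_eq_eval_derivative]
  linear_combination h
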